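/- arXiv:1912.03224 — 7 statements merged into one kernel-verified Lean document; each statement's English description precedes it below -/
import Mathlib

section
/- Let H be a k-uniform hypergraph with m edges whose incidence energy BE(H) is a rational number. Then BE(H) is an integer; moreover if k is even then BE(H) is even, and if k is odd then BE(H) ≡ m (mod 2). -/
open Matrix BigOperators Finset

/-- Incidence matrix of a hypergraph on vertex set `Fin n` with edges `E : Fin m → Finset (Fin n)`. -/
noncomputable def inc {n m : ℕ} (E : Fin m → Finset (Fin n)) : Matrix (Fin n) (Fin m) ℝ :=
  fun v e => if v ∈ E e then 1 else 0

/-- Adjacency matrix of the line multigraph: `(e,f)`-entry is `|E e ∩ E f|` for `e ≠ f`, `0` on diagonal. -/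
noncomputable def lineAdj {n m : ℕ} (E : Fin m → Finset (Fin n)) : Matrix (Fin m) (Fin m) ℝ :=
  fun e f => if e = f then 0 else ((E e ∩ E f).card : ℝ)

/-- Adjacency matrix of the clique multigraph: `(u,v)`-entry is the number of edges containing both. -/
noncomputable def cliqueAdj {n m : ℕ} (E : Fin m → Finset (Fin n)) : Matrix (Fin n) (Fin n) ℝ :=
  fun u v => if u = v then 0 else ((univ.filter fun e => u ∈ E e ∧ v ∈ E e).card : ℝ)

/-- Degree of a vertex: number of edges containing it. -/
def deg {n m : ℕ} (E : Fin m → Finset (Fin n)) (v : Fin n) : ℕ :=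
  (univ.filter fun e => v ∈ E e).card
/-!
The squared singular values of the incidence matrix `B` are the eigenvalues of the integer
matrix `B Bᵀ`, hence algebraic integers, and so are their square roots and the energy
`z = ∑ √λᵢ`; being rational, `z` is an integer. Moreover `z² = ∑ λᵢ + 2t` with `t` the
algebraic integer `∑_{i<j} √λᵢ √λⱼ`, which is rational too, and `∑ λᵢ = tr (B Bᵀ) = km`.
Hence `z ≡ z² ≡ km (mod 2)`.
-/

lemma IsIntegral.exists_int_of_eq_ratCast {K : Type*} [Field K] [CharZero K] {x : K}
    (hx : IsIntegral ℤ x) {q : ℚ} (h : x = q) : ∃ z : ℤ, x = z := by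
  have hq : IsIntegral ℤ q := by
    rw [← isIntegral_algHom_iff (algebraMap ℚ K).toIntAlgHom (algebraMap ℚ K).injective]
    simpa [← h] using hx
  obtain ⟨z, rfl⟩ := IsIntegrallyClosed.isIntegral_iff.mp hq
  exact ⟨z, by simp [h]⟩

lemma exists_sq_sum_eq_sum_sq_add_two_mul {ι R : Type*} [CommSemiring R] (S : Subsemiring R)
    (s : Finset ι) {f : ι → R} (hf : ∀ i ∈ s, f i ∈ S) :
    ∃ t ∈ S, (∑ i ∈ s, f i) ^ 2 = ∑ i ∈ s, f i ^ 2 + 2 * t := by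
  classical
  induction s using Finset.induction_on with
  | empty => exact ⟨0, S.zero_mem, by simp⟩
  | insert a s ha ih =>
    obtain ⟨t, ht, hsq⟩ := ih fun i hi => hf i (mem_insert_of_mem hi)
    have hfS : ∑ i ∈ s, f i ∈ S := S.sum_mem fun i hi => hf i (mem_insert_of_mem hi)
    refine ⟨t + f a * ∑ i ∈ s, f i, S.add_mem ht (S.mul_mem (hf a (mem_insert_self a s)) hfS), ?_⟩
    rw [sum_insert ha, sum_insert ha, add_sq, hsq]
    ring

lemma Matrix.IsHermitian.isIntegral_eigenvalues {ι : Type*} [Fintype ι] [DecidableEq ι]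
    {A : Matrix ι ι ℝ} (hA : A.IsHermitian) {B : Matrix ι ι ℤ} (hB : B.map Int.cast = A)
    (i : ι) : IsIntegral ℤ (hA.eigenvalues i) := by
  refine ⟨B.charpoly, B.charpoly_monic, ?_⟩
  rw [Polynomial.eval₂_eq_eval_map, ← charpoly_map, show B.map (algebraMap ℤ ℝ) = A from hB,
    hA.charpoly_eq, Polynomial.eval_prod]
  exact prod_eq_zero (mem_univ i) (by simp)

lemma Int.parity_of_sq_eq {z t : ℤ} {k m : ℕ} (h : z ^ 2 = k * m + 2 * t) :
    (Even k → Even z) ∧ (Odd k → z % 2 = m % 2) := by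
  have hz : Even z ↔ Even ((k : ℤ) * m) := by
    rw [← Int.even_pow' two_ne_zero, h]; simp [parity_simps]
  constructor
  · intro hk
    exact hz.2 (by simp [parity_simps, hk])
  · intro hk
    have hzm : Even z ↔ Even (m : ℤ) := hz.trans (by simp [parity_simps, hk])
    rw [Int.even_iff, Int.even_iff] at hzm
    omega

lemma inc_eq_map_intCast {n m : ℕ} (E : Fin m → Finset (Fin n)) :
    inc E = (of fun v e => if v ∈ E e then (1 : ℤ) else 0).map (Int.castRingHom ℝ) := by
  ext v e
  simp [inc, apply_ite]

lemma trace_inc_mul_transpose {n m k : ℕ} (E : Fin m → Finset (Fin n))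
    (hk : ∀ e, (E e).card = k) : (inc E * (inc E)ᵀ).trace = k * m := by
  rw [trace_mul_comm, trace]
  simp [mul_apply, inc, hk, mul_comm]

lemma exists_int_sum_sqrt_eigenvalues_eq {n m k : ℕ} (E : Fin m → Finset (Fin n))
    (hk : ∀ e, (E e).card = k) (hQ : (inc E * (inc E)ᵀ).IsHermitian) {q : ℚ}
    (hq : ∑ i, √(hQ.eigenvalues i) = q) :
    ∃ z t : ℤ, ∑ i, √(hQ.eigenvalues i) = z ∧ z ^ 2 = k * m + 2 * t := by
  have hnn : ∀ i, 0 ≤ hQ.eigenvalues i := by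
    simpa [conjTranspose_eq_transpose_of_trivial] using
      eigenvalues_self_mul_conjTranspose_nonneg (inc E)
  have hint : ∀ i, IsIntegral ℤ (√(hQ.eigenvalues i)) := by
    intro i
    refine IsIntegral.of_pow two_pos ?_
    rw [Real.sq_sqrt (hnn i)]
    obtain ⟨B, hB⟩ : ∃ B : Matrix (Fin n) (Fin m) ℤ, B.map (Int.castRingHom ℝ) = inc E :=
      ⟨_, (inc_eq_map_intCast E).symm⟩
    refine hQ.isIntegral_eigenvalues (B := B * Bᵀ) ?_ i
    rw [← hB, ← transpose_map, ← Matrix.map_mul]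
    rfl
  obtain ⟨z, hz⟩ := (IsIntegral.sum _ fun i _ => hint i).exists_int_of_eq_ratCast hq
  obtain ⟨t, ht, hsq⟩ := exists_sq_sum_eq_sum_sq_add_two_mul (integralClosure ℤ ℝ).toSubsemiring
    univ fun i _ => hint i
  have htr : ∑ i, √(hQ.eigenvalues i) ^ 2 = k * m := by
    simp_rw [Real.sq_sqrt (hnn _), ← trace_inc_mul_transpose E hk, hQ.trace_eq_sum_eigenvalues]
    rfl
  rw [htr] at hsq
  obtain ⟨t, rfl⟩ : ∃ t' : ℤ, t = t' := ht.exists_int_of_eq_ratCast (q := (q ^ 2 - k * m) / 2)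
    (by rw [hq] at hsq; push_cast; linarith)
  exact ⟨z, t, hz, by rw [hz] at hsq; exact_mod_cast hsq⟩

theorem stmt5_general {n m k : ℕ} (E : Fin m → Finset (Fin n))
    (hk : ∀ e, (E e).card = k)
    (hQ : (inc E * (inc E)ᵀ).IsHermitian)
    (hrat : ∃ q : ℚ, (∑ i, Real.sqrt (hQ.eigenvalues i)) = (q : ℝ)) :
    ∃ z : ℤ, (∑ i, Real.sqrt (hQ.eigenvalues i)) = (z : ℝ) ∧
      (Even k → Even z) ∧ (Odd k → z % 2 = (m : ℤ) % 2) := by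
  obtain ⟨q, hq⟩ := hrat
  obtain ⟨z, t, hz, hsq⟩ := exists_int_sum_sqrt_eigenvalues_eq E hk hQ hq
  exact ⟨z, hz, Int.parity_of_sq_eq hsq⟩

/-- if `BE(H)` is rational then it is an integer, even when `k` is even,
and of the same parity as `m` when `k` is odd. -/
theorem stmt5 {n m k : ℕ} (E : Fin m → Finset (Fin n))
    (hk2 : 2 ≤ k) (hk : ∀ e, (E e).card = k)
    (hQ : (inc E * (inc E)ᵀ).IsHermitian)
    (hrat : ∃ q : ℚ, (∑ i, Real.sqrt (hQ.eigenvalues i)) = (q : ℝ)) :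
    ∃ z : ℤ, (∑ i, Real.sqrt (hQ.eigenvalues i)) = (z : ℝ) ∧
      (Even k → Even z) ∧ (Odd k → z % 2 = (m : ℤ) % 2) :=
  stmt5_general E hk hQ hrat
end

section
/- Let H be a k-uniform hypergraph and e an edge of H. Then BE(H) > BE(H − e), where H − e is the hypergraph obtained by deleting edge e. -/
/-!
Deleting the edge `e` removes the rank-one summand `b bᵀ` from `Q(H) = B Bᵀ`, where `b` is the
incidence column of `e`; so `Q(H - e) ≤ Q(H)` in the Loewner order, with trace smaller by
`|e| = k > 0`. For `0 ≤ A ≤ B` with `tr A < tr B`, let `S = √A` and let `(bᵢ)` be an orthonormal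
eigenbasis of `B`. By Cauchy–Schwarz `⟪bᵢ, S bᵢ⟫ ≤ ‖S bᵢ‖ = √⟪bᵢ, A bᵢ⟫ ≤ √λᵢ(B)`, and summing over
`i` gives `∑ √λ(A) = tr S ≤ ∑ √λ(B)`; the inequality is strict since `tr A < tr B` forces
`⟪bᵢ, A bᵢ⟫ < λᵢ(B)` for some `i`.
-/

open Matrix BigOperators Finset

open scoped InnerProductSpace ComplexOrder

theorem LinearMap.IsSymmetric.inner_map_self_le_sqrt {E : Type*} [NormedAddCommGroup E]
    [InnerProductSpace ℝ E] {T : E →ₗ[ℝ] E} (hT : T.IsSymmetric) {x : E} (hx : ‖x‖ = 1) :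
    ⟪x, T x⟫_ℝ ≤ √⟪x, T (T x)⟫_ℝ :=
  calc ⟪x, T x⟫_ℝ ≤ ‖x‖ * ‖T x‖ := real_inner_le_norm x (T x)
    _ = √⟪x, T (T x)⟫_ℝ := by
      rw [hx, one_mul, ← hT, real_inner_self_eq_norm_sq, Real.sqrt_sq (norm_nonneg _)]

namespace Matrix

variable {n : Type*} [Fintype n] [DecidableEq n]

theorem trace_eq_sum_inner_toEuclideanLin {𝕜 : Type*} [RCLike 𝕜] (M : Matrix n n 𝕜)
    (b : OrthonormalBasis n 𝕜 (EuclideanSpace 𝕜 n)) :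
    M.trace = ∑ i, ⟪b i, M.toEuclideanLin (b i)⟫_𝕜 := by
  rw [← LinearMap.trace_eq_sum_inner, toEuclideanLin_eq_toLin_orthonormal, trace_toLin_eq]

theorem IsHermitian.eigenvalues_eq_inner {A : Matrix n n ℝ} (hA : A.IsHermitian) (i : n) :
    hA.eigenvalues i = ⟪hA.eigenvectorBasis i, A.toEuclideanLin (hA.eigenvectorBasis i)⟫_ℝ := by
  rw [hA.eigenvalues_eq]
  simp [EuclideanSpace.inner_eq_star_dotProduct, dotProduct_comm]

theorem IsHermitian.trace_cfc {𝕜 : Type*} [RCLike 𝕜] {A : Matrix n n 𝕜} (hA : A.IsHermitian)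
    (f : ℝ → ℝ) : (cfc f A).trace = ∑ i, (f (hA.eigenvalues i) : 𝕜) := by
  rw [hA.cfc_eq, IsHermitian.cfc, Unitary.conjStarAlgAut_apply, trace_mul_cycle,
    Unitary.coe_star_mul_self, one_mul, trace_diagonal]
  rfl

theorem PosSemidef.cfc_sqrt_mul_self {𝕜 : Type*} [RCLike 𝕜] {A : Matrix n n 𝕜}
    (hA : A.PosSemidef) : cfc Real.sqrt A * cfc Real.sqrt A = A := by
  rw [← cfc_mul Real.sqrt Real.sqrt A]
  conv_rhs => rw [← cfc_id' ℝ A hA.1]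
  refine cfc_congr fun x hx => ?_
  rw [hA.1.spectrum_real_eq_range_eigenvalues] at hx
  obtain ⟨i, rfl⟩ := hx
  exact Real.mul_self_sqrt (hA.eigenvalues_nonneg i)

theorem PosSemidef.sum_sqrt_eigenvalues_lt {A B : Matrix n n ℝ} (hA : A.PosSemidef)
    (hB : B.IsHermitian) (hAB : (B - A).PosSemidef) (htr : A.trace < B.trace) :
    ∑ i, √(hA.1.eigenvalues i) < ∑ i, √(hB.eigenvalues i) := by
  set S := cfc Real.sqrt A
  set b := hB.eigenvectorBasis
  have hS : S.toEuclideanLin.IsSymmetric :=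
    isSymmetric_toEuclideanLin_iff.mpr (cfc_predicate Real.sqrt A).isHermitian
  have hSS : ∀ x, S.toEuclideanLin (S.toEuclideanLin x) = A.toEuclideanLin x := fun x => by
    rw [← hA.cfc_sqrt_mul_self, toLpLin_mul 2 2 2]
    rfl
  have hA_nonneg : ∀ i, 0 ≤ ⟪b i, A.toEuclideanLin (b i)⟫_ℝ := fun i =>
    (isPositive_toEuclideanLin_iff.mpr hA).inner_nonneg_right (b i)
  have hA_le_B : ∀ i, ⟪b i, A.toEuclideanLin (b i)⟫_ℝ ≤ ⟪b i, B.toEuclideanLin (b i)⟫_ℝ :=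
    fun i => sub_nonneg.mp <| by
      simpa [inner_sub_right] using
        (isPositive_toEuclideanLin_iff.mpr hAB).inner_nonneg_right (b i)
  rw [trace_eq_sum_inner_toEuclideanLin A b, trace_eq_sum_inner_toEuclideanLin B b] at htr
  obtain ⟨i₀, -, hA_lt_B⟩ := exists_lt_of_sum_lt htr
  calc ∑ i, √(hA.1.eigenvalues i)
      = S.trace := (hA.1.trace_cfc Real.sqrt).symm
    _ = ∑ i, ⟪b i, S.toEuclideanLin (b i)⟫_ℝ := trace_eq_sum_inner_toEuclideanLin S b
    _ ≤ ∑ i, √⟪b i, A.toEuclideanLin (b i)⟫_ℝ := sum_le_sum fun i _ => by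
      rw [← hSS]
      exact hS.inner_map_self_le_sqrt (b.orthonormal.1 i)
    _ < ∑ i, √⟪b i, B.toEuclideanLin (b i)⟫_ℝ :=
      sum_lt_sum (fun i _ => Real.sqrt_le_sqrt (hA_le_B i))
        ⟨i₀, mem_univ _, Real.sqrt_lt_sqrt (hA_nonneg i₀) hA_lt_B⟩
    _ = ∑ i, √(hB.eigenvalues i) := by simp only [b, hB.eigenvalues_eq_inner]

theorem mul_transpose_eq_succAbove_add_vecMulVec {R l : Type*} [CommSemiring R] {m : ℕ}
    (C : Matrix l (Fin (m + 1)) R) (j : Fin (m + 1)) :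
    C * Cᵀ = C.submatrix id j.succAbove * (C.submatrix id j.succAbove)ᵀ +
      vecMulVec (Cᵀ j) (Cᵀ j) := by
  ext u v
  simp [mul_apply, Fin.sum_univ_succAbove _ j, vecMulVec_apply, add_comm]

end Matrix

theorem inc_comp {n m p : ℕ} (E : Fin m → Finset (Fin n)) (f : Fin p → Fin m) :
    inc (E ∘ f) = (inc E).submatrix id f := rfl

theorem inc_transpose_dotProduct_self {n m : ℕ} (E : Fin m → Finset (Fin n)) (j : Fin m) :
    (inc E)ᵀ j ⬝ᵥ (inc E)ᵀ j = (E j).card := by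
  simp [dotProduct, inc]

/-- deleting an edge strictly decreases the incidence energy. -/
theorem stmt6 {n m k : ℕ} (E : Fin (m + 1) → Finset (Fin n)) (j : Fin (m + 1))
    (hk2 : 2 ≤ k) (hk : ∀ e, (E e).card = k)
    (hQ : (inc E * (inc E)ᵀ).IsHermitian)
    (hQ' : (inc (E ∘ j.succAbove) * (inc (E ∘ j.succAbove))ᵀ).IsHermitian) :
    (∑ i, Real.sqrt (hQ'.eigenvalues i)) < ∑ i, Real.sqrt (hQ.eigenvalues i) := by
  set b := (inc E)ᵀ j
  have hsplit : inc E * (inc E)ᵀ - inc (E ∘ j.succAbove) * (inc (E ∘ j.succAbove))ᵀ =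
      vecMulVec b b := by
    rw [inc_comp, sub_eq_iff_eq_add', ← mul_transpose_eq_succAbove_add_vecMulVec]
  have hQ'_psd : (inc (E ∘ j.succAbove) * (inc (E ∘ j.succAbove))ᵀ).PosSemidef := by
    simpa using posSemidef_self_mul_conjTranspose (inc (E ∘ j.succAbove))
  have hb_psd : (vecMulVec b b).PosSemidef := by
    simpa using posSemidef_vecMulVec_self_star b
  have hb_trace : 0 < (vecMulVec b b).trace := by
    rw [trace_vecMulVec, inc_transpose_dotProduct_self, hk]
    exact_mod_cast (by omega : 0 < k)
  refine hQ'_psd.sum_sqrt_eigenvalues_lt hQ (hsplit ▸ hb_psd) ?_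
  rw [← hsplit, trace_sub] at hb_trace
  linarith
end

section
/- Let H be a k-uniform hypergraph with m edges and incidence matrix B of rank r. Then BE(H) ≤ √(kmr) ≤ √k · m, with equality if and only if H consists of pairwise disjoint edges. -/
/-!
The eigenvalues `λᵢ` of `BBᵀ` are nonnegative, exactly `r` of them are nonzero, and they sum to
`tr (BᵀB) = km`; Cauchy–Schwarz over the nonzero ones gives `∑ √λᵢ ≤ √(rkm)`, and `r ≤ m`.
Expanding `∑ (√λᵢ - √k)²` over the nonzero eigenvalues shows that `∑ √λᵢ = √k m` exactly when
every nonzero `λᵢ` equals `k`, i.e. when `(BBᵀ)² = k BBᵀ`. Comparing traces, this happens exactly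
when `BᵀB = k I`, whose off-diagonal entries are the sizes `|e ∩ f|`.
-/

open Matrix BigOperators Finset

lemma Matrix.IsHermitian.mul_self_eq_smul_iff {𝕜 ι : Type*} [RCLike 𝕜] [Fintype ι] [DecidableEq ι]
    {A : Matrix ι ι 𝕜} (hA : A.IsHermitian) (c : ℝ) :
    A * A = c • A ↔ ∀ i, hA.eigenvalues i = 0 ∨ hA.eigenvalues i = c := by
  rw [← sq, ← cfc_pow_id (R := ℝ) A 2 hA.isSelfAdjoint,
    ← cfc_const_mul_id (R := ℝ) c A hA.isSelfAdjoint, cfc_eq_cfc_iff_eqOn,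
    hA.spectrum_real_eq_range_eigenvalues]
  simp [Set.EqOn, sq, or_comm]

section SumSqrt

variable {ι : Type*} [Fintype ι] {μ : ι → ℝ}

lemma sum_sqrt_filter_ne_zero : ∑ i with μ i ≠ 0, √(μ i) = ∑ i, √(μ i) :=
  sum_filter_of_ne fun i _ h hi => h (by simp [hi])

lemma sum_sqrt_le_sqrt_card_mul_sum (hμ : ∀ i, 0 ≤ μ i) :
    ∑ i, √(μ i) ≤ √(#{i | μ i ≠ 0} * ∑ i, μ i) := by
  rw [Real.le_sqrt (by positivity) (mul_nonneg (by positivity) (sum_nonneg fun i _ => hμ i))]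
  calc (∑ i, √(μ i)) ^ 2 = (∑ i with μ i ≠ 0, √(μ i)) ^ 2 := by
        rw [sum_sqrt_filter_ne_zero]
    _ ≤ #{i | μ i ≠ 0} * ∑ i with μ i ≠ 0, √(μ i) ^ 2 := sq_sum_le_card_mul_sum_sq
    _ = #{i | μ i ≠ 0} * ∑ i, μ i := by
        simp only [Real.sq_sqrt (hμ _), sum_filter_ne_zero]

lemma sum_sqrt_eq_sqrt_mul_iff {k m : ℝ} (hμ : ∀ i, 0 ≤ μ i) (hk : 0 < k)
    (hsum : ∑ i, μ i = k * m) (hcard : (#{i | μ i ≠ 0} : ℝ) ≤ m) :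
    ∑ i, √(μ i) = √k * m ↔ ∀ i, μ i = 0 ∨ μ i = k := by
  have hkk : √k * √k = k := Real.mul_self_sqrt hk.le
  constructor
  · intro h
    set S : Finset ι := {i | μ i ≠ 0}
    have hsq : ∀ i, (√(μ i) - √k) ^ 2 = μ i - 2 * √k * √(μ i) + k := fun i => by
      rw [sub_sq, Real.sq_sqrt (hμ i), Real.sq_sqrt hk.le]
      ring
    have hdev : ∑ i ∈ S, (√(μ i) - √k) ^ 2 = (#S - m) * k := by
      rw [sum_congr rfl fun i _ => hsq i, sum_add_distrib, sum_sub_distrib, ← mul_sum,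
        sum_const, nsmul_eq_mul, sum_filter_ne_zero, sum_sqrt_filter_ne_zero, hsum, h]
      linear_combination (-2 * m) * hkk
    have hzero : ∀ i ∈ S, (√(μ i) - √k) ^ 2 = 0 :=
      (sum_eq_zero_iff_of_nonneg fun _ _ => sq_nonneg _).1 <| le_antisymm
        (hdev ▸ mul_nonpos_of_nonpos_of_nonneg (by linarith) hk.le)
        (sum_nonneg fun _ _ => sq_nonneg _)
    intro i
    refine or_iff_not_imp_left.2 fun hi => ?_
    have hroot : √(μ i) = √k := by
      simpa [sub_eq_zero] using hzero i (by simpa [S] using hi)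
    rwa [Real.sqrt_inj (hμ i) hk.le] at hroot
  · intro h
    have hroot : ∀ i, √k * √(μ i) = μ i := fun i => by
      rcases h i with hi | hi <;> simp [hi, hkk]
    have hk' : √k ≠ 0 := (Real.sqrt_pos.2 hk).ne'
    apply mul_left_cancel₀ hk'
    rw [mul_sum, sum_congr rfl fun i _ => hroot i, hsum, ← mul_assoc, hkk]

end SumSqrt

section Hypergraph

variable {n m k : ℕ} (E : Fin m → Finset (Fin n))

lemma transpose_inc_mul_inc_apply (e f : Fin m) :
    ((inc E)ᵀ * inc E) e f = #(E e ∩ E f) := by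
  simp only [mul_apply, transpose_apply, inc, ite_mul, one_mul, zero_mul, ← ite_and]
  rw [sum_boole]
  simp [Finset.filter_and]

lemma trace_inc_mul_transpose_inc (hk : ∀ e, #(E e) = k) :
    trace (inc E * (inc E)ᵀ) = k * m := by
  rw [trace_mul_comm]
  simp [trace, transpose_inc_mul_inc_apply, hk, mul_comm]

lemma transpose_inc_mul_inc_eq_smul_one_iff (hk : ∀ e, #(E e) = k) :
    (inc E)ᵀ * inc E = (k : ℝ) • 1 ↔ ∀ e f, e ≠ f → Disjoint (E e) (E f) := by
  rw [← Matrix.ext_iff]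
  refine forall_congr' fun e => forall_congr' fun f => ?_
  rcases eq_or_ne e f with rfl | hef
  · simp [transpose_inc_mul_inc_apply, hk]
  · simp [transpose_inc_mul_inc_apply, hef, Finset.disjoint_iff_inter_eq_empty]

lemma inc_mul_transpose_inc_mul_self_eq_smul_iff (hk : ∀ e, #(E e) = k) :
    inc E * (inc E)ᵀ * (inc E * (inc E)ᵀ) = (k : ℝ) • (inc E * (inc E)ᵀ) ↔
      (inc E)ᵀ * inc E = (k : ℝ) • 1 := by
  set B := inc E
  constructor
  · intro h
    have hM : (Bᵀ * B)ᵀ = Bᵀ * B := by rw [transpose_mul, transpose_transpose]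
    have htrM : trace (Bᵀ * B) = k * m := by
      rw [trace_mul_comm]
      exact trace_inc_mul_transpose_inc E hk
    have htrMM : trace (Bᵀ * B * (Bᵀ * B)) = k * (k * m) := by
      calc trace (Bᵀ * B * (Bᵀ * B)) = trace (B * Bᵀ * (B * Bᵀ)) := by
            rw [Matrix.mul_assoc, trace_mul_comm]
            simp only [Matrix.mul_assoc]
        _ = k * (k * m) := by rw [h, trace_smul, trace_inc_mul_transpose_inc E hk, smul_eq_mul]
    -- `BᵀB - k • 1` has zero Frobenius norm.
    rw [← sub_eq_zero, ← trace_conjTranspose_mul_self_eq_zero_iff,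
      conjTranspose_eq_transpose_of_trivial, transpose_sub, hM, transpose_smul, transpose_one]
    simp only [sub_mul, mul_sub, Matrix.smul_mul, Matrix.mul_smul, Matrix.one_mul, Matrix.mul_one,
      trace_sub, trace_smul, trace_one, htrM, htrMM, Fintype.card_fin, smul_eq_mul]
    ring
  · intro h
    rw [Matrix.mul_assoc, ← Matrix.mul_assoc Bᵀ, h, Matrix.smul_mul, Matrix.one_mul,
      Matrix.mul_smul]

end Hypergraph

/-- `BE(H) ≤ √(kmr) ≤ √k · m` where `r = rank B`, with equality iff
the edges of `H` are pairwise disjoint. -/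
theorem stmt8 {n m k : ℕ} (E : Fin m → Finset (Fin n))
    (hk2 : 2 ≤ k) (hk : ∀ e, (E e).card = k)
    (hQ : (inc E * (inc E)ᵀ).IsHermitian)
    (r : ℕ) (hr : r = (inc E).rank) :
    (∑ i, Real.sqrt (hQ.eigenvalues i)) ≤ Real.sqrt (k * m * r) ∧
    Real.sqrt (k * m * r) ≤ Real.sqrt k * m ∧
    ((∑ i, Real.sqrt (hQ.eigenvalues i)) = Real.sqrt k * m ↔
      ∀ e f : Fin m, e ≠ f → Disjoint (E e) (E f)) := by
  have hk0 : (0 : ℝ) < k := by exact_mod_cast (by omega : 0 < k)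
  have hμ : ∀ i, 0 ≤ hQ.eigenvalues i := by
    simpa using eigenvalues_self_mul_conjTranspose_nonneg (inc E)
  have hsum : ∑ i, hQ.eigenvalues i = k * m := by
    simpa using (hQ.trace_eq_sum_eigenvalues.symm.trans (trace_inc_mul_transpose_inc E hk))
  have hcard : #{i | hQ.eigenvalues i ≠ 0} = r := by
    rw [hr, ← rank_self_mul_transpose, hQ.rank_eq_card_non_zero_eigs, Fintype.card_subtype]
  have hrm : (r : ℝ) ≤ m := by exact_mod_cast hr ▸ rank_le_width (inc E)
  refine ⟨?_, ?_, ?_⟩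
  · simpa [hcard, hsum, mul_comm, mul_left_comm] using sum_sqrt_le_sqrt_card_mul_sum hμ
  · calc √(k * m * r) ≤ √(k * (m * m)) := Real.sqrt_le_sqrt (by rw [← mul_assoc]; gcongr)
      _ = √k * m := by rw [Real.sqrt_mul hk0.le, Real.sqrt_mul_self (Nat.cast_nonneg m)]
  · rw [sum_sqrt_eq_sqrt_mul_iff hμ hk0 hsum (by rwa [hcard]), ← hQ.mul_self_eq_smul_iff,
      inc_mul_transpose_inc_mul_self_eq_smul_iff E hk, transpose_inc_mul_inc_eq_smul_one_iff E hk]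
end

section
/- Let H be a k-uniform hypergraph on n vertices with signless Laplacian Q and Zagreb index Z(H) = Σ_v d(v)^2. Then ρ(Q) ≥ k√(Z(H)/n), with equality if and only if H is regular (assuming H connected). -/
open Matrix BigOperators Finset

/-! Write `Q = B Bᵀ` and `𝟙` for the all-ones vector. Every edge has `k` vertices, so
`Q 𝟙 = (k d(u))ᵤ`, whence `‖Q 𝟙‖² = k² Z` and `‖𝟙‖² = n`. In an orthonormal eigenbasis of `Q`,
whose eigenvalues lie in `[0, ρ]` as `Q` is positive semidefinite, each coordinate of `Q 𝟙` is at
most `ρ` times that of `𝟙` in absolute value, so `k² Z ≤ ρ² n`, with equality iff `Q 𝟙 = ρ 𝟙`,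
i.e. iff `k d(u) = ρ` for all `u`. This forces regularity. Conversely, if `H` is `d`-regular, all
row sums of the nonnegative matrix `Q` equal `k d`, so Gershgorin's theorem gives `ρ ≤ k d`,
while the inequality gives `k d ≤ ρ`. -/
theorem Finset.sum_sq_mul_le_and_eq_iff {ι : Type*} (s : Finset ι) {a c : ι → ℝ} {ρ : ℝ}
    (ha₀ : ∀ i ∈ s, 0 ≤ a i) (haρ : ∀ i ∈ s, a i ≤ ρ) :
    ∑ i ∈ s, (a i * c i) ^ 2 ≤ ρ ^ 2 * ∑ i ∈ s, c i ^ 2 ∧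
      (∑ i ∈ s, (a i * c i) ^ 2 = ρ ^ 2 * ∑ i ∈ s, c i ^ 2 ↔ ∀ i ∈ s, a i * c i = ρ * c i) := by
  have habs : ∀ i ∈ s, |a i * c i| = a i * |c i| ∧ |ρ * c i| = ρ * |c i| := fun i hi =>
    ⟨by rw [abs_mul, abs_of_nonneg (ha₀ i hi)],
      by rw [abs_mul, abs_of_nonneg ((ha₀ i hi).trans (haρ i hi))]⟩
  have hterm : ∀ i ∈ s, (a i * c i) ^ 2 ≤ (ρ * c i) ^ 2 := fun i hi => by
    rw [sq_le_sq, (habs i hi).1, (habs i hi).2]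
    exact mul_le_mul_of_nonneg_right (haρ i hi) (abs_nonneg _)
  simp_rw [Finset.mul_sum, ← mul_pow]
  refine ⟨sum_le_sum hterm, (sum_eq_sum_iff_of_le hterm).trans (forall₂_congr fun i hi => ?_)⟩
  rw [sq_eq_sq_iff_abs_eq_abs, (habs i hi).1, (habs i hi).2]
  rcases eq_or_ne (c i) 0 with hc | hc
  · simp [hc]
  · rw [mul_left_inj' (abs_ne_zero.2 hc), mul_left_inj' hc]

namespace Matrix.IsHermitian

variable {ι : Type*} [Fintype ι] [DecidableEq ι] {A : Matrix ι ι ℝ} (hA : A.IsHermitian)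

theorem eigenvectorBasis_repr_mulVec (x : ι → ℝ) (i : ι) :
    hA.eigenvectorBasis.repr (WithLp.toLp 2 (A *ᵥ x)) i =
      hA.eigenvalues i * hA.eigenvectorBasis.repr (WithLp.toLp 2 x) i := by
  simp only [OrthonormalBasis.repr_apply_apply, EuclideanSpace.inner_eq_star_dotProduct,
    star_trivial]
  rw [dotProduct_comm, dotProduct_mulVec, ← mulVec_transpose,
    ← conjTranspose_eq_transpose_of_trivial, hA.eq, hA.mulVec_eigenvectorBasis, smul_dotProduct,
    smul_eq_mul, dotProduct_comm]

theorem sum_sq_eq_sum_sq_eigenvectorBasis_repr (x : ι → ℝ) :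
    ∑ u, x u ^ 2 = ∑ i, hA.eigenvectorBasis.repr (WithLp.toLp 2 x) i ^ 2 := by
  rw [← EuclideanSpace.real_norm_sq_eq (hA.eigenvectorBasis.repr _), LinearIsometryEquiv.norm_map,
    EuclideanSpace.real_norm_sq_eq]

theorem sum_sq_mulVec_le_and_eq_iff {ρ : ℝ} (h₀ : ∀ i, 0 ≤ hA.eigenvalues i)
    (hρ : ∀ i, hA.eigenvalues i ≤ ρ) (x : ι → ℝ) :
    ∑ u, (A *ᵥ x) u ^ 2 ≤ ρ ^ 2 * ∑ u, x u ^ 2 ∧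
      (∑ u, (A *ᵥ x) u ^ 2 = ρ ^ 2 * ∑ u, x u ^ 2 ↔ A *ᵥ x = ρ • x) := by
  have hrepr : A *ᵥ x = ρ • x ↔ ∀ i, hA.eigenvalues i * hA.eigenvectorBasis.repr (WithLp.toLp 2 x) i
      = ρ * hA.eigenvectorBasis.repr (WithLp.toLp 2 x) i := by
    rw [← (WithLp.toLp_injective 2).eq_iff, ← hA.eigenvectorBasis.repr.injective.eq_iff,
      WithLp.toLp_smul, map_smul, PiLp.ext_iff]
    simp only [hA.eigenvectorBasis_repr_mulVec, PiLp.smul_apply, smul_eq_mul]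
  rw [hrepr, hA.sum_sq_eq_sum_sq_eigenvectorBasis_repr x,
    hA.sum_sq_eq_sum_sq_eigenvectorBasis_repr (A *ᵥ x)]
  simp only [hA.eigenvectorBasis_repr_mulVec]
  simpa only [mem_univ, forall_const] using
    sum_sq_mul_le_and_eq_iff univ (fun i _ => h₀ i) (fun i _ => hρ i)

end Matrix.IsHermitian

theorem Matrix.le_of_mem_spectrum_of_sum_row_le {ι : Type*} [Fintype ι] [DecidableEq ι]
    {A : Matrix ι ι ℝ} (hA : ∀ i j, 0 ≤ A i j) {r : ℝ} (hr : ∀ i, ∑ j, A i j ≤ r) {μ : ℝ}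
    (hμ : μ ∈ spectrum ℝ A) : μ ≤ r := by
  rw [← spectrum_toLin', ← Module.End.hasEigenvalue_iff_mem_spectrum] at hμ
  obtain ⟨i, hi⟩ := eigenvalue_mem_ball hμ
  rw [Metric.mem_closedBall, Real.dist_eq] at hi
  calc μ ≤ A i i + ∑ j ∈ univ.erase i, ‖A i j‖ := by linarith [le_abs_self (μ - A i i)]
    _ = ∑ j, A i j := by
      simp only [Real.norm_of_nonneg (hA i _), add_sum_erase _ _ (mem_univ i)]
    _ ≤ r := hr i

section Hypergraph

variable {n m : ℕ} (E : Fin m → Finset (Fin n))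

theorem inc_mul_transpose_nonneg (u v : Fin n) : 0 ≤ (inc E * (inc E)ᵀ) u v := by
  rw [mul_apply]
  exact sum_nonneg fun e _ => by simp only [inc, transpose_apply]; positivity

theorem posSemidef_inc_mul_transpose : (inc E * (inc E)ᵀ).PosSemidef := by
  simpa only [conjTranspose_eq_transpose_of_trivial] using posSemidef_self_mul_conjTranspose (inc E)

theorem inc_mulVec_one : inc E *ᵥ 1 = fun v => (deg E v : ℝ) := by
  ext v
  simp [mulVec, dotProduct, inc, deg]

theorem transpose_inc_mulVec_one : (inc E)ᵀ *ᵥ 1 = fun e => ((E e).card : ℝ) := by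
  ext e
  simp [mulVec, dotProduct, inc]

theorem inc_mul_transpose_mulVec_one {k : ℕ} (hk : ∀ e, (E e).card = k) :
    (inc E * (inc E)ᵀ) *ᵥ 1 = fun v => (k : ℝ) * deg E v := by
  have hconst : (inc E)ᵀ *ᵥ 1 = (k : ℝ) • 1 := by
    ext e
    simp [transpose_inc_mulVec_one, hk]
  rw [← mulVec_mulVec, hconst, mulVec_smul, inc_mulVec_one]
  rfl

end Hypergraph

theorem Real.mul_sqrt_div_le_iff {a b c ρ : ℝ} (ha : 0 ≤ a) (hb : 0 ≤ b) (hc : 0 < c)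
    (hρ : 0 ≤ ρ) : a * √(b / c) ≤ ρ ↔ a ^ 2 * b ≤ ρ ^ 2 * c := by
  rw [← pow_le_pow_iff_left₀ (by positivity) hρ two_ne_zero, mul_pow,
    sq_sqrt (div_nonneg hb hc.le), ← mul_div_assoc, div_le_iff₀ hc]

theorem Real.mul_sqrt_div_eq_iff {a b c ρ : ℝ} (ha : 0 ≤ a) (hb : 0 ≤ b) (hc : 0 < c)
    (hρ : 0 ≤ ρ) : a * √(b / c) = ρ ↔ a ^ 2 * b = ρ ^ 2 * c := by
  rw [← sq_eq_sq₀ (by positivity) hρ, mul_pow, sq_sqrt (div_nonneg hb hc.le), ← mul_div_assoc,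
    div_eq_iff hc.ne']

theorem stmt10_general {n m k : ℕ} (E : Fin m → Finset (Fin n))
    (hk2 : 2 ≤ k) (hk : ∀ e, (E e).card = k)
    (hQ : (inc E * (inc E)ᵀ).IsHermitian)
    (ρ : ℝ) (hρ : IsGreatest (Set.range hQ.eigenvalues) ρ)
    (Z : ℝ) (hZ : Z = ∑ v, (deg E v : ℝ) ^ 2) :
    (k : ℝ) * Real.sqrt (Z / n) ≤ ρ ∧
    (ρ = (k : ℝ) * Real.sqrt (Z / n) ↔ ∀ u v : Fin n, deg E u = deg E v) := by
  obtain ⟨⟨i₀, hi₀⟩, hρmax⟩ := hρ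
  have hn : (0 : ℝ) < n := Nat.cast_pos.2 i₀.pos
  have hk₀ : (0 : ℝ) < k := Nat.cast_pos.2 (by omega)
  have heig₀ := (posSemidef_inc_mul_transpose E).eigenvalues_nonneg
  have hρ₀ : 0 ≤ ρ := hi₀ ▸ heig₀ i₀
  have hZ₀ : 0 ≤ Z := hZ ▸ sum_nonneg fun v _ => sq_nonneg _
  have hQ1 := inc_mul_transpose_mulVec_one E hk
  have hnormQ1 : ∑ u, ((inc E * (inc E)ᵀ) *ᵥ 1) u ^ 2 = (k : ℝ) ^ 2 * Z := by
    simp only [hQ1, hZ, mul_pow, mul_sum]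
  have hnorm1 : ∑ u, (1 : Fin n → ℝ) u ^ 2 = n := by simp
  obtain ⟨hle, heq⟩ := hQ.sum_sq_mulVec_le_and_eq_iff heig₀ (fun i => hρmax ⟨i, rfl⟩) 1
  rw [hnormQ1, hnorm1] at hle heq
  rw [hQ1, funext_iff] at heq
  simp only [Pi.smul_apply, Pi.one_apply, smul_eq_mul, mul_one] at heq
  refine ⟨(Real.mul_sqrt_div_le_iff hk₀.le hZ₀ hn hρ₀).2 hle, ?_⟩
  rw [eq_comm, Real.mul_sqrt_div_eq_iff hk₀.le hZ₀ hn hρ₀, heq]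
  refine ⟨fun h u v => by exact_mod_cast mul_left_cancel₀ hk₀.ne' ((h u).trans (h v).symm),
    fun hreg u => le_antisymm ?_ ?_⟩
  · have hZu : Z = n * (deg E u : ℝ) ^ 2 := by simp [hZ, hreg _ u]
    rw [hZu] at hle
    refine (pow_le_pow_iff_left₀ (by positivity) hρ₀ two_ne_zero).1
      (le_of_mul_le_mul_right (by linarith) hn)
  · refine hi₀ ▸ le_of_mem_spectrum_of_sum_row_le (inc_mul_transpose_nonneg E) (fun w => ?_)
      (hQ.eigenvalues_mem_spectrum_real i₀)
    have hrow := congrFun hQ1 w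
    simp only [mulVec, dotProduct, Pi.one_apply, mul_one] at hrow
    rw [hrow, hreg w u]

/-- for a connected `k`-graph, `ρ(Q) ≥ k√(Z(H)/n)` with equality iff
`H` is regular. -/
theorem stmt10 {n m k : ℕ} (E : Fin m → Finset (Fin n))
    (hk2 : 2 ≤ k) (hk : ∀ e, (E e).card = k) (hn : 0 < n)
    (hconn : ∀ u v : Fin n,
      Relation.ReflTransGen (fun a b => ∃ e, a ∈ E e ∧ b ∈ E e) u v)
    (hQ : (inc E * (inc E)ᵀ).IsHermitian)
    (ρ : ℝ) (hρ : IsGreatest (Set.range hQ.eigenvalues) ρ)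
    (Z : ℝ) (hZ : Z = ∑ v, (deg E v : ℝ) ^ 2) :
    (k : ℝ) * Real.sqrt (Z / n) ≤ ρ ∧
    (ρ = (k : ℝ) * Real.sqrt (Z / n) ↔ ∀ u v : Fin n, deg E u = deg E v) :=
  stmt10_general E hk2 hk hQ ρ hρ Z hZ
end

section
/- Let H be a k-uniform hypergraph with n vertices and m edges with m < n. Then QE(H) − 2km(n−m)/n ≤ E(A_L) < QE(H), and the first inequality is an equality if and only if every pair of distinct edges of H is disjoint. -/
/-!
Write `B` for the incidence matrix and `λⱼ` for the eigenvalues of `A_L`. Since `BᵀB = kI + A_L`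
and `BBᵀ` has the spectrum of `BᵀB` together with `n - m` extra zeros,
`QE(H) = m d + ∑ⱼ |λⱼ + d|` with `d = k - km/n > 0` (because `(n - m) km/n = m d`).
Both inequalities are then the triangle inequalities `|λ + d| ≤ |λ| + d` and
`|λ| ≤ |λ + d| + d`, the second strict whenever `λ ≥ 0`, which happens for some `j` because
`∑ⱼ λⱼ = tr A_L = 0`. Equality in the first forces every `λⱼ ≥ 0`, hence every `λⱼ = 0`,
i.e. `A_L = 0`: the edges are pairwise disjoint.
-/

open Matrix BigOperators Finset

open Polynomial

namespace Polynomial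

variable {R : Type*} [CommRing R] [IsDomain R] {ι κ : Type*} [Fintype ι] [Fintype κ]

theorem roots_X_pow_mul_prod_X_sub_C (a : ℕ) (μ : ι → R) :
    (X ^ a * ∏ i, (X - C (μ i))).roots = a • {0} + univ.val.map μ := by
  rw [roots_mul (mul_ne_zero (pow_ne_zero _ X_ne_zero) (monic_prod_of_monic _ _
    fun i _ => monic_X_sub_C (μ i)).ne_zero), roots_X_pow, roots_prod _ _ (prod_ne_zero_iff.mpr
    fun i _ => X_sub_C_ne_zero (μ i))]
  simp only [roots_X_sub_C, Multiset.bind_singleton]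

theorem sum_add_nsmul_eq_of_X_pow_mul_prod_X_sub_C_eq {a b : ℕ} {μ : ι → R} {ν : κ → R}
    (h : X ^ a * ∏ i, (X - C (μ i)) = X ^ b * ∏ j, (X - C (ν j)))
    {M : Type*} [AddCommMonoid M] (g : R → M) :
    ∑ i, g (μ i) + a • g 0 = ∑ j, g (ν j) + b • g 0 := by
  have := congrArg (fun p => ((roots p).map g).sum) h
  simp only [roots_X_pow_mul_prod_X_sub_C, Multiset.map_add, Multiset.sum_add, Multiset.map_nsmul,
    Multiset.sum_nsmul, Multiset.map_singleton, Multiset.sum_singleton, Multiset.map_map] at this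
  exact (add_comm _ _).trans (this.trans (add_comm _ _))

end Polynomial

namespace Matrix.IsHermitian

variable {𝕜 : Type*} [RCLike 𝕜] {n : Type*} [Fintype n] [DecidableEq n] {A : Matrix n n 𝕜}

theorem charpoly_scalar_add (hA : A.IsHermitian) (r : 𝕜) :
    (scalar n r + A).charpoly = ∏ i, (X - C (r + hA.eigenvalues i)) := by
  rw [show scalar n r + A = A - scalar n (-r) by rw [map_neg]; abel, charpoly_sub_scalar,
    hA.charpoly_eq, Polynomial.prod_comp]
  refine prod_congr rfl fun i _ => ?_
  simp only [sub_comp, X_comp, C_comp, C_add, C_neg]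
  ring

end Matrix.IsHermitian

section AbsShift

variable {ι : Type*} [Fintype ι] {t : ι → ℝ} {d : ℝ}

theorem sum_abs_add_const_le (hd : 0 ≤ d) :
    ∑ j, |t j + d| ≤ ∑ j, |t j| + Fintype.card ι * d := by
  calc ∑ j, |t j + d| ≤ ∑ j, (|t j| + d) :=
        sum_le_sum fun j _ => (abs_add_le _ _).trans_eq (by rw [abs_of_nonneg hd])
    _ = ∑ j, |t j| + Fintype.card ι * d := by simp [sum_add_distrib]

theorem sum_abs_lt_sum_abs_add_const [Nonempty ι] (ht : ∑ j, t j = 0) (hd : 0 < d) :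
    ∑ j, |t j| < ∑ j, |t j + d| + Fintype.card ι * d := by
  obtain ⟨j₀, hj₀⟩ : ∃ j, 0 ≤ t j := by
    by_contra! h
    exact (sum_neg (fun j _ => h j) univ_nonempty).ne ht
  calc ∑ j, |t j| < ∑ j, (|t j + d| + d) := by
        refine sum_lt_sum (fun j _ => ?_) ⟨j₀, mem_univ _, ?_⟩
        · have := abs_sub_abs_le_abs_sub (t j) (t j + d)
          rw [sub_add_cancel_left, abs_neg, abs_of_pos hd] at this
          linarith
        · rw [abs_of_nonneg hj₀, abs_of_nonneg (by linarith)]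
          linarith
    _ = ∑ j, |t j + d| + Fintype.card ι * d := by simp [sum_add_distrib]

theorem sum_abs_add_const_eq_iff (ht : ∑ j, t j = 0) (hd : 0 < d) :
    ∑ j, |t j + d| = ∑ j, |t j| + Fintype.card ι * d ↔ t = 0 := by
  constructor
  · intro h
    have hterm : ∀ j ∈ univ, |t j + d| = |t j| + |d| :=
      (sum_eq_sum_iff_of_le fun j _ => abs_add_le _ _).mp (by simpa [sum_add_distrib, abs_of_pos hd])
    have hnonneg : ∀ j ∈ univ, 0 ≤ t j := fun j hj => by
      rcases (abs_add_eq_add_abs_iff _ _).mp (hterm j hj) with h | h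
      exacts [h.1, absurd h.2 hd.not_ge]
    funext j
    exact (sum_eq_zero_iff_of_nonneg hnonneg).mp ht j (mem_univ j)
  · rintro rfl
    simp [abs_of_pos hd]

end AbsShift

section Hypergraph

variable {n m k : ℕ} (E : Fin m → Finset (Fin n))

theorem inc_transpose_mul_inc (hk : ∀ e, (E e).card = k) :
    (inc E)ᵀ * inc E = scalar (Fin m) (k : ℝ) + lineAdj E := by
  ext e f
  have hentry : ((inc E)ᵀ * inc E) e f = ((E e ∩ E f).card : ℝ) := by
    simp only [mul_apply, transpose_apply, inc, mul_ite, mul_one, mul_zero, ← ite_and,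
      sum_boole, ← mem_inter, filter_mem_eq_inter, univ_inter, inter_comm]
  rcases eq_or_ne e f with rfl | hef
  · simp [hentry, lineAdj, hk, Matrix.natCast_apply]
  · simp [hentry, lineAdj, hef, Matrix.natCast_apply]

theorem lineAdj_eq_zero_iff : lineAdj E = 0 ↔ ∀ e f, e ≠ f → Disjoint (E e) (E f) := by
  simp [← Matrix.ext_iff, lineAdj, disjoint_iff_inter_eq_empty]

theorem trace_lineAdj : (lineAdj E).trace = 0 := by
  simp [trace, lineAdj]

theorem sum_comp_eigenvalues_inc_mul_transpose (hk : ∀ e, (E e).card = k)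
    (hQ : (inc E * (inc E)ᵀ).IsHermitian) (hL : (lineAdj E).IsHermitian)
    {M : Type*} [AddCommMonoid M] (g : ℝ → M) :
    ∑ i, g (hQ.eigenvalues i) + m • g 0 = ∑ j, g (k + hL.eigenvalues j) + n • g 0 := by
  have h := charpoly_mul_comm' (inc E) (inc E)ᵀ
  rw [inc_transpose_mul_inc E hk, hQ.charpoly_eq, hL.charpoly_scalar_add, Fintype.card_fin,
    Fintype.card_fin] at h
  exact sum_add_nsmul_eq_of_X_pow_mul_prod_X_sub_C_eq h g

theorem sum_abs_eigenvalues_inc_mul_transpose_sub (hk : ∀ e, (E e).card = k)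
    (hQ : (inc E * (inc E)ᵀ).IsHermitian) (hL : (lineAdj E).IsHermitian) (c : ℝ) :
    ∑ i, |hQ.eigenvalues i - c| = (n - m) * |c| + ∑ j, |hL.eigenvalues j + (k - c)| := by
  have h := sum_comp_eigenvalues_inc_mul_transpose E hk hQ hL (fun x => |x - c|)
  simp only [zero_sub, abs_neg, nsmul_eq_mul, add_sub_assoc, add_comm (k : ℝ)] at h
  linarith

end Hypergraph

/-- if `m < n` then `QE(H) - 2km(n-m)/n ≤ E(A_L) < QE(H)`, the first
inequality being an equality iff the edges are pairwise disjoint. -/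
theorem stmt15 {n m k : ℕ} (E : Fin m → Finset (Fin n))
    (hk2 : 2 ≤ k) (hk : ∀ e, (E e).card = k) (hm : 1 ≤ m) (hmn : m < n)
    (hQ : (inc E * (inc E)ᵀ).IsHermitian)
    (hL : (lineAdj E).IsHermitian) :
    ((∑ i, |hQ.eigenvalues i - (k * m : ℝ) / n|) - 2 * k * m * ((n : ℝ) - m) / n ≤
        ∑ j, |hL.eigenvalues j|) ∧
    (∑ j, |hL.eigenvalues j|) < (∑ i, |hQ.eigenvalues i - (k * m : ℝ) / n|) ∧
    ((∑ i, |hQ.eigenvalues i - (k * m : ℝ) / n|) - 2 * k * m * ((n : ℝ) - m) / n =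
        (∑ j, |hL.eigenvalues j|) ↔
      ∀ e f : Fin m, e ≠ f → Disjoint (E e) (E f)) := by
  have hn : (0 : ℝ) < n := by exact_mod_cast (Nat.zero_le m).trans_lt hmn
  have hQE := sum_abs_eigenvalues_inc_mul_transpose_sub E hk hQ hL ((k * m : ℝ) / n)
  set c : ℝ := (k * m : ℝ) / n
  set d : ℝ := k - c
  have hd : 0 < d := by
    have : (m : ℝ) < n := by exact_mod_cast hmn
    have : (0 : ℝ) < k := by exact_mod_cast (by omega : 0 < k)
    simp only [d, c, sub_pos, div_lt_iff₀ hn]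
    nlinarith
  have hcd : ((n : ℝ) - m) * |c| = m * d := by
    rw [abs_of_nonneg (by positivity)]
    simp only [d, c]
    field_simp
  have hgap : 2 * k * m * ((n : ℝ) - m) / n = 2 * (m * d) := by
    simp only [d, c]
    field_simp
  have ht : ∑ j, hL.eigenvalues j = 0 := by
    simpa [trace_lineAdj] using hL.trace_eq_sum_eigenvalues.symm
  have : Nonempty (Fin m) := ⟨⟨0, hm⟩⟩
  have hle := sum_abs_add_const_le (t := hL.eigenvalues) hd.le
  have hlt := sum_abs_lt_sum_abs_add_const ht hd
  have heq := sum_abs_add_const_eq_iff ht hd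
  rw [Fintype.card_fin] at hle hlt heq
  rw [hQE, hcd, hgap, ← lineAdj_eq_zero_iff, ← hL.eigenvalues_eq_zero_iff, ← heq]
  exact ⟨by linarith, by linarith, by constructor <;> intro <;> linarith⟩
end

section
/- Let H be a k-uniform hypergraph with n vertices and m edges with m > n. Then QE(H) < E(A_L) < QE(H) + 2k(m−n). -/
open Matrix BigOperators Finset

section Aux

open Polynomial

lemma my_charpoly_conj {p : Type*} [Fintype p] [DecidableEq p] {R : Type*} [CommRing R]
    (M S T : Matrix p p R) (hST : S * T = 1) (hTS : T * S = 1) :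
    (S * M * T).charpoly = M.charpoly := by
  have hST' : S.map (C : R →+* R[X]) * T.map C = 1 := by
    rw [← Matrix.map_mul, hST, Matrix.map_one _ (map_zero _) (map_one _)]
  have hTS' : T.map (C : R →+* R[X]) * S.map C = 1 := by
    rw [← Matrix.map_mul, hTS, Matrix.map_one _ (map_zero _) (map_one _)]
  have h1 : charmatrix (S * M * T) = S.map C * charmatrix M * T.map C := by
    rw [charmatrix, charmatrix]
    rw [Matrix.mul_sub, Matrix.sub_mul]
    congr 1
    · rw [Matrix.mul_assoc,
        (Matrix.scalar_commute (X : R[X]) (fun r' => Commute.all _ _) (T.map C)).eq,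
        ← Matrix.mul_assoc, hST', Matrix.one_mul]
    · simp only [RingHom.mapMatrix_apply, ← Matrix.map_mul]
  rw [Matrix.charpoly, Matrix.charpoly, h1, det_mul, det_mul, mul_comm, ← mul_assoc, ← det_mul,
    hTS', det_one, one_mul]

lemma my_charpoly_zero {p : Type*} [Fintype p] [DecidableEq p] {R : Type*} [CommRing R] :
    (0 : Matrix p p R).charpoly = X ^ (Fintype.card p) := by
  simp [Matrix.charpoly, charmatrix, det_diagonal]

lemma my_charpoly_diagonal {p : Type*} [Fintype p] [DecidableEq p] {R : Type*} [CommRing R]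
    (d : p → R) : (diagonal d).charpoly = ∏ i, (X - C (d i)) := by
  rw [Matrix.charpoly, charmatrix, RingHom.mapMatrix_apply, diagonal_map (map_zero _),
    scalar_apply, diagonal_sub, det_diagonal]

lemma charpoly_mul_comm_rect {p q : Type*} [Fintype p] [DecidableEq p] [Fintype q] [DecidableEq q]
    {R : Type*} [CommRing R] (A : Matrix p q R) (B : Matrix q p R) :
    (A * B).charpoly * X ^ (Fintype.card q) = (B * A).charpoly * X ^ (Fintype.card p) := by
  let M : Matrix (p ⊕ q) (p ⊕ q) R := fromBlocks (A * B) 0 B 0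
  let S : Matrix (p ⊕ q) (p ⊕ q) R := fromBlocks 1 A 0 1
  let T : Matrix (p ⊕ q) (p ⊕ q) R := fromBlocks 1 (-A) 0 1
  have hST : S * T = 1 := by
    simp [S, T, fromBlocks_multiply, ← fromBlocks_one]
  have hTS : T * S = 1 := by
    simp [S, T, fromBlocks_multiply, ← fromBlocks_one]
  have hN : T * M * S = fromBlocks 0 0 B (B * A) := by
    simp only [M, S, T, fromBlocks_multiply]
    congr 1 <;> simp [Matrix.mul_assoc]
  have h1 : M.charpoly = (A * B).charpoly * X ^ (Fintype.card q) := by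
    rw [show M = fromBlocks (A * B) 0 B 0 from rfl, Matrix.charpoly_fromBlocks_zero₁₂,
      my_charpoly_zero]
  have h2 : M.charpoly = X ^ (Fintype.card p) * (B * A).charpoly := by
    have hM : M = S * (fromBlocks 0 0 B (B * A)) * T := by
      rw [← hN]
      rw [← Matrix.mul_assoc, ← Matrix.mul_assoc, hST, Matrix.one_mul, Matrix.mul_assoc, hST,
        Matrix.mul_one]
    rw [hM, my_charpoly_conj _ _ _ hST hTS, Matrix.charpoly_fromBlocks_zero₁₂, my_charpoly_zero]
  rw [← h1, h2, mul_comm]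

lemma herm_charpoly {p : Type*} [Fintype p] [DecidableEq p] (A : Matrix p p ℝ)
    (hA : A.IsHermitian) (c : ℝ) :
    ((c : ℝ) • (1 : Matrix p p ℝ) + A).charpoly = ∏ i, (X - C (c + hA.eigenvalues i)) := by
  set V : Matrix p p ℝ := (hA.eigenvectorUnitary : Matrix p p ℝ) with hV
  have hVsV : V * star V = 1 := (Matrix.mem_unitaryGroup_iff).mp hA.eigenvectorUnitary.2
  have hsVV : star V * V = 1 := (Matrix.mem_unitaryGroup_iff').mp hA.eigenvectorUnitary.2
  have hspec : A = V * diagonal hA.eigenvalues * star V := hA.spectral_theorem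
  have hd : diagonal (fun i => c + hA.eigenvalues i)
      = c • (1 : Matrix p p ℝ) + diagonal hA.eigenvalues := by
    rw [Matrix.smul_one_eq_diagonal, diagonal_add]
  have key : (c : ℝ) • (1 : Matrix p p ℝ) + A
      = V * diagonal (fun i => c + hA.eigenvalues i) * star V := by
    rw [hd, Matrix.mul_add, Matrix.add_mul, ← hspec]
    congr 1
    rw [Matrix.mul_smul, Matrix.smul_mul, Matrix.mul_one, hVsV]
  rw [key, my_charpoly_conj _ _ _ hVsV hsVV, my_charpoly_diagonal]

lemma herm_charpoly0 {p : Type*} [Fintype p] [DecidableEq p] (A : Matrix p p ℝ)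
    (hA : A.IsHermitian) : A.charpoly = ∏ i, (X - C (hA.eigenvalues i)) := by
  have := herm_charpoly A hA 0
  simpa using this

lemma herm_trace {p : Type*} [Fintype p] [DecidableEq p] (A : Matrix p p ℝ)
    (hA : A.IsHermitian) : A.trace = ∑ i, hA.eigenvalues i := by
  set V : Matrix p p ℝ := (hA.eigenvectorUnitary : Matrix p p ℝ) with hV
  have hsVV : star V * V = 1 := (Matrix.mem_unitaryGroup_iff').mp hA.eigenvectorUnitary.2
  have hspec : A = V * diagonal hA.eigenvalues * star V := hA.spectral_theorem
  conv_lhs => rw [hspec]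
  rw [Matrix.trace_mul_cycle, hsVV, Matrix.one_mul, trace_diagonal]

lemma herm_smul_one {p : Type*} [Fintype p] [DecidableEq p] (A : Matrix p p ℝ)
    (hA : A.IsHermitian) (c : ℝ) (h : ∀ i, hA.eigenvalues i = c) :
    A = c • (1 : Matrix p p ℝ) := by
  set V : Matrix p p ℝ := (hA.eigenvectorUnitary : Matrix p p ℝ) with hV
  have hVsV : V * star V = 1 := (Matrix.mem_unitaryGroup_iff).mp hA.eigenvectorUnitary.2
  have hspec : A = V * diagonal hA.eigenvalues * star V := hA.spectral_theorem
  rw [hspec]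
  have : diagonal hA.eigenvalues = c • (1 : Matrix p p ℝ) := by
    rw [Matrix.smul_one_eq_diagonal]
    exact congrArg diagonal (_root_.funext h)
  rw [this, Matrix.mul_smul, Matrix.smul_mul, Matrix.mul_one, hVsV]

end Aux

section Main

open Polynomial

/-- if `m > n` then `QE(H) < E(A_L) < QE(H) + 2k(m-n)`. -/
theorem stmt16 {n m k : ℕ} (E : Fin m → Finset (Fin n))
    (hk2 : 2 ≤ k) (hk : ∀ e, (E e).card = k) (hmn : n < m)
    (hQ : (inc E * (inc E)ᵀ).IsHermitian)
    (hL : (lineAdj E).IsHermitian) :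
    (∑ i, |hQ.eigenvalues i - (k * m : ℝ) / n|) < (∑ j, |hL.eigenvalues j|) ∧
    (∑ j, |hL.eigenvalues j|) <
      (∑ i, |hQ.eigenvalues i - (k * m : ℝ) / n|) + 2 * k * ((m : ℝ) - n) := by
  classical
  set μ := hQ.eigenvalues with hμ
  set ν := hL.eigenvalues with hν
  -- basic positivity
  have hm1 : 1 ≤ m := lt_of_le_of_lt (Nat.zero_le n) hmn
  have e0 : Fin m := ⟨0, hm1⟩
  have hn2 : 2 ≤ n := by
    have h1 : (E e0).card = k := hk e0
    have h2 : (E e0).card ≤ n := by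
      simpa using Finset.card_le_card (Finset.subset_univ (E e0))
    omega
  have hn0 : (0 : ℝ) < n := by exact_mod_cast (by omega : 0 < n)
  have hk0 : (0 : ℝ) < k := by exact_mod_cast (by omega : 0 < k)
  have hsum : ∀ (A B : Finset (Fin n)),
      (∑ v, (if v ∈ A then (1:ℝ) else 0) * (if v ∈ B then (1:ℝ) else 0))
        = ((A ∩ B).card : ℝ) := by
    intro A B
    have h1 : ∀ v : Fin n, (if v ∈ A then (1:ℝ) else 0) * (if v ∈ B then (1:ℝ) else 0)
        = if v ∈ A ∩ B then (1:ℝ) else 0 := by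
      intro v; by_cases h1 : v ∈ A <;> by_cases h2 : v ∈ B <;> simp [h1, h2]
    rw [Finset.sum_congr rfl (fun v _ => h1 v), Finset.sum_ite_mem, Finset.univ_inter,
      Finset.sum_const, nsmul_eq_mul, mul_one]
  -- F1 : Bᵀ B = k • 1 + L
  have hF1 : (inc E)ᵀ * inc E = (k : ℝ) • (1 : Matrix (Fin m) (Fin m) ℝ) + lineAdj E := by
    ext e f
    by_cases hef : e = f
    · subst hef
      simp [Matrix.mul_apply, Matrix.transpose_apply, inc, lineAdj, Matrix.one_apply, hsum,
        Finset.inter_self, hk e]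
    · simp only [Matrix.mul_apply, Matrix.transpose_apply, inc, lineAdj, Matrix.add_apply,
        Matrix.smul_apply, Matrix.one_apply, smul_eq_mul, hsum, if_neg hef,
        if_neg (Ne.symm hef), Finset.inter_comm (E f) (E e)]
      ring
  -- charpolys
  have hcQ : (inc E * (inc E)ᵀ).charpoly = ∏ i, (X - C (μ i)) := herm_charpoly0 _ hQ
  have hcT : ((inc E)ᵀ * inc E).charpoly = ∏ j, (X - C ((k : ℝ) + ν j)) := by
    rw [hF1]; exact herm_charpoly _ hL k
  have hrect := charpoly_mul_comm_rect (inc E) (inc E)ᵀ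
  rw [hcQ, hcT, Fintype.card_fin, Fintype.card_fin] at hrect
  -- roots
  have hrootsProd : ∀ {p : ℕ} (f : Fin p → ℝ),
      (∏ i, (X - C (f i))).roots = Finset.univ.val.map f := by
    intro p f
    rw [Finset.prod_eq_multiset_prod]
    have h2 : (Multiset.map (fun i => X - C (f i)) Finset.univ.val)
        = (Finset.univ.val.map f).map (fun a => X - C a) := by
      rw [Multiset.map_map]; rfl
    rw [h2, roots_multiset_prod_X_sub_C]
  have hmonic : ∀ {p : ℕ} (f : Fin p → ℝ), (∏ i, (X - C (f i))).Monic := by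
    intro p f
    exact monic_prod_of_monic _ _ (fun i _ => monic_X_sub_C _)
  have hroots := congrArg Polynomial.roots hrect
  rw [roots_mul (mul_ne_zero (hmonic μ).ne_zero (pow_ne_zero _ X_ne_zero)),
    roots_mul (mul_ne_zero (hmonic _).ne_zero (pow_ne_zero _ X_ne_zero)),
    roots_pow, roots_pow, roots_X, hrootsProd, hrootsProd] at hroots
  -- multiset identity
  have hms : (Finset.univ.val.map (fun j => (k : ℝ) + ν j))
      = Finset.univ.val.map μ + (m - n) • ({0} : Multiset ℝ) := by
    have hmn' : m • ({0} : Multiset ℝ) = (m - n) • ({0} : Multiset ℝ) + n • {0} := by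
      rw [← add_nsmul, Nat.sub_add_cancel hmn.le]
    rw [hmn', ← add_assoc] at hroots
    exact (add_right_cancel hroots).symm
  -- sum transfer
  have hsum2 : ∀ f : ℝ → ℝ,
      (∑ j, f ((k : ℝ) + ν j)) = (∑ i, f (μ i)) + ((m - n : ℕ) : ℝ) * f 0 := by
    intro f
    have h1 : (∑ j, f ((k : ℝ) + ν j))
        = ((Finset.univ.val.map (fun j => (k : ℝ) + ν j)).map f).sum := by
      rw [Multiset.map_map]
      exact Finset.sum_congr rfl (fun _ _ => rfl) |>.trans (Finset.sum_eq_multiset_sum _ _)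
    rw [h1, hms, Multiset.map_add, Multiset.sum_add]
    congr 1
    · rw [Multiset.map_map]
      exact (Finset.sum_eq_multiset_sum _ _).symm
    · rw [Multiset.nsmul_singleton, Multiset.map_replicate, Multiset.sum_replicate, nsmul_eq_mul]
  -- E(A_L) in terms of μ
  have h0k : |(0 : ℝ) - k| = k := by rw [zero_sub, abs_neg, abs_of_pos hk0]
  have hEsum : (∑ j, |ν j|) = (∑ i, |μ i - k|) + ((m - n : ℕ) : ℝ) * k := by
    have h := hsum2 (fun x => |x - k|)
    simp only [add_sub_cancel_left] at h
    rw [h, h0k]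
  -- sum of μ
  have htrL : (∑ j, ν j) = 0 := by
    have h1 : (lineAdj E).trace = 0 := by simp [Matrix.trace, Matrix.diag, lineAdj]
    rw [hν, ← herm_trace _ hL, h1]
  have hSμ : (∑ i, μ i) = k * m := by
    have h := hsum2 id
    simp only [id_eq, mul_zero, add_zero] at h
    rw [Finset.sum_add_distrib, Finset.sum_const, card_univ, Fintype.card_fin, nsmul_eq_mul,
      htrL, add_zero] at h
    rw [← h, mul_comm]
  -- the quantity c = km/n
  set c : ℝ := (k * m : ℝ) / n with hc
  have hnc : (n : ℝ) * c = k * m := by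
    rw [hc]; field_simp
  have hck : (k : ℝ) < c := by
    rw [hc, lt_div_iff₀ hn0]
    have : (n : ℝ) < m := by exact_mod_cast hmn
    nlinarith
  have hkmn : ((m - n : ℕ) : ℝ) = (m : ℝ) - n := by
    rw [Nat.cast_sub hmn.le]
  have hncmk : (n : ℝ) * (c - k) = ((m - n : ℕ) : ℝ) * k := by
    rw [hkmn]; nlinarith [hnc]
  -- existence of a large eigenvalue
  have hex1 : ∃ i ∈ Finset.univ, |μ i - c| < |μ i - k| + (c - k) := by
    have hex : ∃ i, (k : ℝ) < μ i := by
      by_contra hcon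
      push_neg at hcon
      have h1 : (∑ i, μ i) ≤ ∑ _i : Fin n, (k : ℝ) := Finset.sum_le_sum fun i _ => hcon i
      rw [hSμ, Finset.sum_const, card_univ, Fintype.card_fin, nsmul_eq_mul] at h1
      have h2 : (n : ℝ) < m := by exact_mod_cast hmn
      nlinarith
    obtain ⟨i, hi⟩ := hex
    refine ⟨i, Finset.mem_univ i, ?_⟩
    rw [show |μ i - k| = μ i - k from abs_of_pos (by linarith)]
    rw [abs_lt]
    constructor <;> linarith
  have hpt1 : ∀ i ∈ Finset.univ, |μ i - c| ≤ |μ i - k| + (c - k) := by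
    intro i _
    have h1 := abs_sub_le (μ i) (k : ℝ) c
    rwa [show |(k : ℝ) - c| = c - k by rw [abs_of_neg (by linarith), neg_sub]] at h1
  have goal1 : (∑ i, |μ i - c|) < ∑ j, |ν j| := by
    calc (∑ i, |μ i - c|) < ∑ i, (|μ i - k| + (c - k)) := Finset.sum_lt_sum hpt1 hex1
      _ = (∑ i, |μ i - k|) + (n : ℝ) * (c - k) := by
        rw [Finset.sum_add_distrib, Finset.sum_const, card_univ, Fintype.card_fin, nsmul_eq_mul]
      _ = (∑ i, |μ i - k|) + ((m - n : ℕ) : ℝ) * k := by rw [hncmk]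
      _ = ∑ j, |ν j| := hEsum.symm
  -- second inequality
  have hex2 : ∃ i ∈ Finset.univ, |μ i - k| < |μ i - c| + (c - k) := by
    have hex : ∃ i, μ i < c := by
      by_contra hcon
      push_neg at hcon
      have hall : ∀ i, μ i = c := by
        intro i
        by_contra hne
        have hlt : c < μ i := lt_of_le_of_ne (hcon i) (Ne.symm hne)
        have h1 : (∑ _i : Fin n, c) < ∑ i, μ i :=
          Finset.sum_lt_sum (fun i _ => hcon i) ⟨i, Finset.mem_univ i, hlt⟩
        rw [hSμ, Finset.sum_const, card_univ, Fintype.card_fin, nsmul_eq_mul] at h1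
        linarith
      have hQc : inc E * (inc E)ᵀ = c • (1 : Matrix (Fin n) (Fin n) ℝ) :=
        herm_smul_one _ hQ c hall
      obtain ⟨u, hu, v, hv, huv⟩ := Finset.one_lt_card.mp (by rw [hk e0]; omega)
      have hzero : (inc E * (inc E)ᵀ) u v = 0 := by
        rw [hQc]
        simp [Matrix.one_apply, huv]
      have hpos : (1 : ℝ) ≤ (inc E * (inc E)ᵀ) u v := by
        have h1 : (inc E * (inc E)ᵀ) u v
            = ∑ e, (if u ∈ E e then (1:ℝ) else 0) * (if v ∈ E e then (1:ℝ) else 0) := by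
          simp [Matrix.mul_apply, Matrix.transpose_apply, inc]
        rw [h1]
        have h2 := Finset.single_le_sum
          (f := fun e => (if u ∈ E e then (1:ℝ) else 0) * (if v ∈ E e then (1:ℝ) else 0))
          (fun e _ => by by_cases h1 : u ∈ E e <;> by_cases h2 : v ∈ E e <;> simp [h1, h2])
          (Finset.mem_univ e0)
        simpa [hu, hv] using h2
      rw [hzero] at hpos
      linarith
    obtain ⟨i, hi⟩ := hex
    refine ⟨i, Finset.mem_univ i, ?_⟩
    rw [show |μ i - c| = c - μ i by rw [abs_of_neg (by linarith), neg_sub]]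
    rw [abs_lt]
    constructor <;> linarith
  have hpt2 : ∀ i ∈ Finset.univ, |μ i - k| ≤ |μ i - c| + (c - k) := by
    intro i _
    have h1 := abs_sub_le (μ i) c (k : ℝ)
    rwa [show |c - (k : ℝ)| = c - k from abs_of_pos (by linarith)] at h1
  have goal2 : (∑ j, |ν j|) < (∑ i, |μ i - c|) + 2 * k * ((m : ℝ) - n) := by
    have h3 : (∑ i, |μ i - k|) < (∑ i, |μ i - c|) + (n : ℝ) * (c - k) := by
      calc (∑ i, |μ i - k|) < ∑ i, (|μ i - c| + (c - k)) := Finset.sum_lt_sum hpt2 hex2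
        _ = (∑ i, |μ i - c|) + (n : ℝ) * (c - k) := by
          rw [Finset.sum_add_distrib, Finset.sum_const, card_univ, Fintype.card_fin, nsmul_eq_mul]
    rw [hEsum]
    have h4 : ((m - n : ℕ) : ℝ) * k = k * ((m : ℝ) - n) := by rw [hkmn]; ring
    rw [hncmk] at h3
    rw [h4] at h3 ⊢
    linarith
  exact ⟨goal1, goal2⟩
end Main
end

section
/- Let H be a non-complete k-uniform hypergraph on n vertices and e a k-subset of vertices not an edge of H. Then |QE(H+e) − QE(H)| ≤ 2k − 2k/n. -/
open Matrix BigOperators Finset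

/-!
For a real symmetric matrix `A = V diag(μ) Vᵀ`, the energy `∑ |μᵢ|` is the maximum of `tr (U A)`
over orthogonal `U`: diagonal entries of the orthogonal matrix `Vᵀ U V` are at most `1` in absolute
value, and `U = V diag(sign μ) Vᵀ` attains the bound. Hence two energies differ by at most
`sup_U |tr (U (A - B))|`. Adding the edge `e` and shifting by the new average degree changes
`Q - (km/n) I` by `χχᵀ - (k/n) I`, where `χ` is the indicator of `e`. With `P = χχᵀ / k` this is
`(k - k/n) P - (k/n) (I - P)`, where `P` and `I - P` are orthogonal projections of traces `1` and
`n - 1`, and `|tr (U P)| ≤ tr P` for positive semidefinite `P`.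
-/

namespace Matrix

variable {ι : Type*} [Fintype ι]

lemma _root_.IsStarProjection.posSemidef {R : Type*} [CommRing R] [PartialOrder R] [StarRing R]
    [StarOrderedRing R] {P : Matrix ι ι R} (hP : IsStarProjection P) : P.PosSemidef := by
  have h := posSemidef_conjTranspose_mul_self P
  rwa [← star_eq_conjTranspose, hP.isSelfAdjoint.star_eq, hP.isIdempotentElem.eq] at h

lemma isStarProjection_inv_smul_vecMulVec_self {x : ι → ℝ} (hx : x ⬝ᵥ x ≠ 0) :
    IsStarProjection ((x ⬝ᵥ x)⁻¹ • vecMulVec x x) where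
  isIdempotentElem := by
    rw [IsIdempotentElem, Matrix.smul_mul, Matrix.mul_smul, vecMulVec_mul_vecMulVec,
      vecMulVec_smul, smul_smul, smul_smul, inv_mul_cancel_right₀ hx]
  isSelfAdjoint := by
    rw [IsSelfAdjoint, star_smul, star_trivial, star_eq_conjTranspose, conjTranspose_vecMulVec]
    simp

variable [DecidableEq ι]

lemma abs_trace_mul_conj_diagonal_le {U V : Matrix ι ι ℝ} (hU : U ∈ unitaryGroup ι ℝ)
    (hV : V ∈ unitaryGroup ι ℝ) (μ : ι → ℝ) :
    |(U * (V * diagonal μ * star V)).trace| ≤ ∑ i, |μ i| := by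
  set W := star V * U * V
  have hW : W ∈ unitaryGroup ι ℝ := mul_mem (mul_mem (Unitary.star_mem hV) hU) hV
  have htrace : (U * (V * diagonal μ * star V)).trace = ∑ i, W i i * μ i := by
    rw [← mul_assoc, trace_mul_comm]
    simp only [W, trace, diag_apply, ← mul_diagonal, mul_assoc]
  rw [htrace]
  calc |∑ i, W i i * μ i| ≤ ∑ i, |W i i * μ i| := Finset.abs_sum_le_sum_abs _ _
    _ ≤ ∑ i, |μ i| := Finset.sum_le_sum fun i _ => by
        rw [abs_mul]
        exact mul_le_of_le_one_left (abs_nonneg _) (entry_norm_bound_of_unitary hW i i)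

lemma exists_trace_mul_conj_diagonal_eq {V : Matrix ι ι ℝ} (hV : V ∈ unitaryGroup ι ℝ)
    (μ : ι → ℝ) : ∃ U ∈ unitaryGroup ι ℝ, (U * (V * diagonal μ * star V)).trace = ∑ i, |μ i| := by
  set s : ι → ℝ := fun i => if 0 ≤ μ i then 1 else -1
  have hs : diagonal s ∈ unitaryGroup ι ℝ := by
    rw [mem_unitaryGroup_iff', star_eq_conjTranspose, diagonal_conjTranspose,
      diagonal_mul_diagonal, ← diagonal_one]
    congr 1
    funext i
    simp only [s, Pi.star_apply, star_trivial]
    split_ifs <;> norm_num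
  refine ⟨V * diagonal s * star V, mul_mem (mul_mem hV hs) (Unitary.star_mem hV), ?_⟩
  have hVV : star V * V = 1 := mem_unitaryGroup_iff'.mp hV
  calc (V * diagonal s * star V * (V * diagonal μ * star V)).trace
      = (V * (diagonal s * diagonal μ) * star V).trace := by
        simp only [mul_assoc, ← mul_assoc (star V) V, hVV, one_mul]
    _ = (diagonal s * diagonal μ).trace := by
        rw [trace_mul_comm, ← mul_assoc, hVV, one_mul]
    _ = ∑ i, |μ i| := by
        rw [diagonal_mul_diagonal, trace_diagonal]
        refine Finset.sum_congr rfl fun i _ => ?_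
        simp only [s]
        split_ifs with h
        · rw [abs_of_nonneg h, one_mul]
        · rw [abs_of_neg (not_le.mp h), neg_one_mul]

lemma IsHermitian.conj_diagonal_eigenvalues_sub {A : Matrix ι ι ℝ} (hA : A.IsHermitian) (c : ℝ) :
    (hA.eigenvectorUnitary : Matrix ι ι ℝ) * diagonal (fun i => hA.eigenvalues i - c) *
      star (hA.eigenvectorUnitary : Matrix ι ι ℝ) = A - c • 1 := by
  set V := (hA.eigenvectorUnitary : Matrix ι ι ℝ)
  have hV : V * star V = 1 := mem_unitaryGroup_iff.mp hA.eigenvectorUnitary.2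
  have hc : c • (1 : Matrix ι ι ℝ) = V * diagonal (fun _ => c) * star V := by
    rw [← smul_one_eq_diagonal, Matrix.mul_smul, mul_one, Matrix.smul_mul, hV]
  conv_rhs => rw [hA.spectral_theorem, Unitary.conjStarAlgAut_apply, hc]
  rw [← sub_mul, ← mul_sub, ← diagonal_sub]
  rfl

theorem abs_sum_abs_sub_sum_abs_le {A B V W : Matrix ι ι ℝ} {μ ν : ι → ℝ}
    (hV : V ∈ unitaryGroup ι ℝ) (hW : W ∈ unitaryGroup ι ℝ)
    (hA : V * diagonal μ * star V = A) (hB : W * diagonal ν * star W = B) {β : ℝ}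
    (hβ : ∀ U ∈ unitaryGroup ι ℝ, |(U * (A - B)).trace| ≤ β) :
    abs ((∑ i, |μ i|) - ∑ i, |ν i|) ≤ β := by
  obtain ⟨U, hU, hUA⟩ := exists_trace_mul_conj_diagonal_eq hV μ
  obtain ⟨U', hU', hU'B⟩ := exists_trace_mul_conj_diagonal_eq hW ν
  subst hA hB
  have hUB := abs_trace_mul_conj_diagonal_le hU hW ν
  have hU'A := abs_trace_mul_conj_diagonal_le hU' hV μ
  have hβU := hβ U hU
  have hβU' := hβ U' hU'
  rw [mul_sub, trace_sub] at hβU hβU'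
  rw [abs_le] at *
  constructor <;> linarith

lemma PosSemidef.abs_trace_mul_le {U P : Matrix ι ι ℝ} (hU : U ∈ unitaryGroup ι ℝ)
    (hP : P.PosSemidef) : |(U * P).trace| ≤ P.trace := by
  have hspec := hP.1.conj_diagonal_eigenvalues_sub 0
  simp only [sub_zero, zero_smul] at hspec
  calc |(U * P).trace| = |(U * (_ * diagonal hP.1.eigenvalues * star _)).trace| := by
        rw [hspec]
    _ ≤ ∑ i, |hP.1.eigenvalues i| := abs_trace_mul_conj_diagonal_le hU hP.1.eigenvectorUnitary.2 _
    _ = P.trace := by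
        simp only [abs_of_nonneg (hP.eigenvalues_nonneg _), hP.1.trace_eq_sum_eigenvalues]
        rfl

lemma abs_trace_mul_smul_sub_smul_one_sub_le {U P : Matrix ι ι ℝ} (hU : U ∈ unitaryGroup ι ℝ)
    (hP : IsStarProjection P) {a b : ℝ} (ha : 0 ≤ a) (hb : 0 ≤ b) :
    |(U * (a • P - b • (1 - P))).trace| ≤ a * P.trace + b * (1 - P).trace := by
  have hUP := hP.posSemidef.abs_trace_mul_le hU
  have hUQ := hP.one_sub.posSemidef.abs_trace_mul_le hU
  rw [Matrix.mul_sub, Matrix.mul_smul, Matrix.mul_smul, trace_sub, trace_smul, trace_smul,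
    smul_eq_mul, smul_eq_mul]
  calc |a * (U * P).trace - b * (U * (1 - P)).trace|
      ≤ a * |(U * P).trace| + b * |(U * (1 - P)).trace| := by
        refine (abs_sub _ _).trans ?_
        rw [abs_mul, abs_mul, abs_of_nonneg ha, abs_of_nonneg hb]
    _ ≤ a * P.trace + b * (1 - P).trace := by gcongr

theorem abs_trace_mul_vecMulVec_self_sub_le {U : Matrix ι ι ℝ} (hU : U ∈ unitaryGroup ι ℝ)
    (x : ι → ℝ) :
    |(U * (vecMulVec x x - (x ⬝ᵥ x / Fintype.card ι) • 1)).trace| ≤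
      2 * (x ⬝ᵥ x) - 2 * (x ⬝ᵥ x) / Fintype.card ι := by
  set r := x ⬝ᵥ x
  set N : ℝ := (Fintype.card ι : ℝ)
  by_cases hx : x = 0
  · simp [r, hx]
  have hr : 0 < r := lt_of_le_of_ne (Fintype.sum_nonneg fun i => mul_self_nonneg (x i))
    (Ne.symm (dotProduct_self_eq_zero.not.mpr hx))
  have hN : 1 ≤ N := by
    obtain ⟨i, -⟩ := Function.ne_iff.mp hx
    exact Nat.one_le_cast.mpr (Fintype.card_pos_iff.mpr ⟨i⟩)
  set P := r⁻¹ • vecMulVec x x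
  have hP : IsStarProjection P := isStarProjection_inv_smul_vecMulVec_self hr.ne'
  have htrP : P.trace = 1 := by
    rw [trace_smul, trace_vecMulVec, smul_eq_mul, inv_mul_cancel₀ hr.ne']
  have hD : vecMulVec x x - (r / N) • 1 = (r - r / N) • P - (r / N) • (1 - P) := by
    rw [show vecMulVec x x = r • P by rw [smul_smul, mul_inv_cancel₀ hr.ne', one_smul]]
    module
  have hrN : r / N ≤ r := div_le_self hr.le hN
  calc |(U * (vecMulVec x x - (r / N) • 1)).trace|
      ≤ (r - r / N) * P.trace + r / N * (1 - P).trace := by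
        rw [hD]
        exact abs_trace_mul_smul_sub_smul_one_sub_le hU hP (sub_nonneg.mpr hrN) (by positivity)
    _ = 2 * r - 2 * r / N := by
        rw [trace_sub, trace_one, htrP]
        field_simp
        ring

end Matrix

lemma inc_cons_mul_transpose {n m : ℕ} (E : Fin m → Finset (Fin n)) (e : Finset (Fin n)) :
    inc (Fin.cons e E) * (inc (Fin.cons e E))ᵀ =
      inc E * (inc E)ᵀ + vecMulVec ((e : Set (Fin n)).indicator 1) ((e : Set (Fin n)).indicator 1) := by
  ext u v
  simp only [mul_apply, inc, transpose_apply, mul_ite, mul_one, mul_zero, Fin.sum_univ_succ,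
    Fin.cons_zero, Fin.cons_succ, Matrix.add_apply, vecMulVec_apply, Set.indicator_apply,
    SetLike.mem_coe, Pi.one_apply]
  ring

lemma dotProduct_indicator_one_self {ι : Type*} [Fintype ι] (s : Finset ι) :
    (s : Set ι).indicator (1 : ι → ℝ) ⬝ᵥ (s : Set ι).indicator 1 = s.card := by
  classical
  simp [dotProduct, Set.indicator_apply]

theorem stmt17_general {n m k : ℕ} (E : Fin m → Finset (Fin n))
    (e : Finset (Fin n)) (he : e.card = k)
    (hQ : (inc E * (inc E)ᵀ).IsHermitian)
    (hQ' : (inc (Fin.cons e E) * (inc (Fin.cons e E))ᵀ).IsHermitian) :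
    abs ((∑ i, |hQ'.eigenvalues i - (k * (m + 1) : ℝ) / n|) -
        ∑ i, |hQ.eigenvalues i - (k * m : ℝ) / n|) ≤
      2 * k - 2 * k / n := by
  set χ : Fin n → ℝ := (e : Set (Fin n)).indicator 1
  have hχ : χ ⬝ᵥ χ = k := by rw [dotProduct_indicator_one_self, he]
  refine abs_sum_abs_sub_sum_abs_le hQ'.eigenvectorUnitary.2 hQ.eigenvectorUnitary.2
    (hQ'.conj_diagonal_eigenvalues_sub _) (hQ.conj_diagonal_eigenvalues_sub _) fun U hU => ?_
  have hdiff : inc (Fin.cons e E) * (inc (Fin.cons e E))ᵀ - ((k * (m + 1) : ℝ) / n) • 1 -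
      (inc E * (inc E)ᵀ - ((k * m : ℝ) / n) • 1) =
      vecMulVec χ χ - (χ ⬝ᵥ χ / Fintype.card (Fin n)) • 1 := by
    rw [inc_cons_mul_transpose, hχ, Fintype.card_fin]
    module
  simpa [hdiff, hχ] using abs_trace_mul_vecMulVec_self_sub_le hU χ

/-- adding a non-edge `e` changes the signless Laplacian energy by at
most `2k - 2k/n`. -/
theorem stmt17 {n m k : ℕ} (E : Fin m → Finset (Fin n))
    (hk2 : 2 ≤ k) (hk : ∀ e, (E e).card = k) (hn : 0 < n)
    (e : Finset (Fin n)) (he : e.card = k) (hne : ∀ i, E i ≠ e)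
    (hQ : (inc E * (inc E)ᵀ).IsHermitian)
    (hQ' : (inc (Fin.cons e E) * (inc (Fin.cons e E))ᵀ).IsHermitian) :
    abs ((∑ i, |hQ'.eigenvalues i - (k * (m + 1) : ℝ) / n|) -
        ∑ i, |hQ.eigenvalues i - (k * m : ℝ) / n|) ≤
      2 * k - 2 * k / n :=
  stmt17_general E e he hQ hQ'
end
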